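/- arXiv:2512.24221 — 4 statements merged into one kernel-verified Lean document; each statement's English description precedes it below -/
import Mathlib

section
/- With P defined by the Dawson's-chess recursion P(n) = 0 for n ≤ 0 and P(n) = mex{P(i−2) XOR P(n−1−i) : 1 ≤ i ≤ n} for n ≥ 1, the periodic part of P for n ≥ 52 is given explicitly: for n ≥ 52, P(n) depends only on n mod 34, with values (indexed by residues 0,1,...,33) equal to 8,1,1,2,0,3,1,1,0,3,3,2,2,4,4,5,5,9,3,3,0,1,1,3,0,2,1,1,0,4,5,3,7,4. -/
/-!
The recursion has exactly one solution, so it suffices to exhibit one: the 52 known irregular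
values followed by the period of length 34. That this sequence satisfies the recursion for
`1 ≤ n < 174` is a finite computation. Beyond that, periodicity of the sequence passes to the
option sets: in an option `P a ^^^ P b` with `a + b = n - 3`, one of `a`, `b` lies deep enough in
the periodic range to be shifted by 34, so the options at `n` and `n + 34` coincide as soon as
`n ≥ 2 · 52 + 34 + 2 = 140`.
-/

/-- The minimum excluded value of a finite set of naturals. -/
noncomputable def mex (s : Finset ℕ) : ℕ := sInf {n : ℕ | n ∉ s}

theorem mex_eq_of_forall_lt_mem {s : Finset ℕ} {m : ℕ} (hm : m ∉ s) (hlt : ∀ k < m, k ∈ s) :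
    mex s = m :=
  le_antisymm (Nat.sInf_le hm) (le_csInf ⟨m, hm⟩ fun _ hk => not_lt.1 fun h => hk (hlt _ h))

noncomputable def dawsonOptions (P : ℤ → ℕ) (n : ℤ) : Finset ℕ :=
  (Finset.Icc 1 n).image fun i => P (i - 2) ^^^ P (n - 1 - i)

structure IsDawsonSequence (P : ℤ → ℕ) : Prop where
  eq_zero : ∀ n ≤ 0, P n = 0
  eq_mex : ∀ n, 1 ≤ n → P n = mex (dawsonOptions P n)

section

variable {P Q : ℤ → ℕ}

theorem dawsonOptions_congr {n : ℤ} (h : ∀ m < n, P m = Q m) :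
    dawsonOptions P n = dawsonOptions Q n :=
  Finset.image_congr fun i hi => by
    rw [Finset.mem_coe, Finset.mem_Icc] at hi
    simp only [h (i - 2) (by omega), h (n - 1 - i) (by omega)]

theorem IsDawsonSequence.eq (hP : IsDawsonSequence P) (hQ : IsDawsonSequence Q) : P = Q := by
  suffices ∀ k : ℕ, ∀ n : ℤ, n.toNat = k → P n = Q n from funext fun n => this _ n rfl
  intro k
  induction k using Nat.strong_induction_on with
  | _ k ih =>
    intro n hk
    rcases le_or_gt n 0 with hn | hn
    · rw [hP.eq_zero n hn, hQ.eq_zero n hn]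
    · rw [hP.eq_mex n hn, hQ.eq_mex n hn,
        dawsonOptions_congr fun m hm => ih m.toNat (by omega) m rfl]

theorem dawsonOptions_add_period {n₀ p n : ℤ} (hn₀ : 0 ≤ n₀) (hp : 0 ≤ p)
    (hper : ∀ m, n₀ ≤ m → Q (m + p) = Q m) (hn : 2 * n₀ + p + 2 ≤ n) :
    dawsonOptions Q (n + p) = dawsonOptions Q n := by
  ext x
  simp only [dawsonOptions, Finset.mem_image, Finset.mem_Icc]
  constructor
  · rintro ⟨i, ⟨hi₁, hi₂⟩, rfl⟩
    by_cases ha : n₀ + p ≤ i - 2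
    · refine ⟨i - p, by omega, ?_⟩
      rw [show i - 2 = i - p - 2 + p by ring, hper _ (by omega)]
      ring_nf
    · refine ⟨i, by omega, ?_⟩
      rw [show n + p - 1 - i = n - 1 - i + p by ring, hper _ (by omega)]
  · rintro ⟨i, ⟨hi₁, hi₂⟩, rfl⟩
    by_cases ha : n₀ ≤ i - 2
    · refine ⟨i + p, by omega, ?_⟩
      rw [show i + p - 2 = i - 2 + p by ring, hper _ ha]
      ring_nf
    · refine ⟨i, by omega, ?_⟩
      rw [show n + p - 1 - i = n - 1 - i + p by ring, hper _ (by omega)]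

theorem isDawsonSequence_of_periodic {n₀ p : ℤ} (hn₀ : 0 ≤ n₀) (hp : 0 < p)
    (hzero : ∀ n ≤ 0, Q n = 0) (hper : ∀ m, n₀ ≤ m → Q (m + p) = Q m)
    (hbase : ∀ n, 1 ≤ n → n < 2 * n₀ + 2 * p + 2 → Q n = mex (dawsonOptions Q n)) :
    IsDawsonSequence Q := by
  refine ⟨hzero, ?_⟩
  suffices ∀ k : ℕ, ∀ n : ℤ, n.toNat = k → 1 ≤ n → Q n = mex (dawsonOptions Q n) from
    fun n => this _ n rfl
  intro k
  induction k using Nat.strong_induction_on with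
  | _ k ih =>
    intro n hk hn
    by_cases hsmall : n < 2 * n₀ + 2 * p + 2
    · exact hbase n hn hsmall
    · have hprev := ih (n - p).toNat (by omega) (n - p) rfl (by omega)
      rw [show n = n - p + p by ring, hper _ (by omega),
        dawsonOptions_add_period hn₀ hp.le hper (by omega)]
      exact hprev

end

def dawsonGrundy (n : ℤ) : ℕ :=
  if n < 52 then
    [0, 1, 1, 2, 0, 3, 1, 1, 0, 3, 3, 2, 2, 4, 0, 5, 2, 2, 3, 3, 0, 1, 1, 3, 0, 2,
     1, 1, 0, 4, 5, 2, 7, 4, 0, 1, 1, 2, 0, 3, 1, 1, 0, 3, 3, 2, 2, 4, 4, 5, 5, 2].getD n.toNat 0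
  else
    [8, 1, 1, 2, 0, 3, 1, 1, 0, 3, 3, 2, 2, 4, 4, 5, 5, 9, 3, 3, 0, 1,
     1, 3, 0, 2, 1, 1, 0, 4, 5, 3, 7, 4].getD (n % 34).toNat 0

theorem dawsonGrundy_of_nonpos (n : ℤ) (hn : n ≤ 0) : dawsonGrundy n = 0 := by
  rw [dawsonGrundy, if_pos (by omega), Int.toNat_of_nonpos hn]
  rfl

theorem dawsonGrundy_add_period (m : ℤ) (hm : 52 ≤ m) :
    dawsonGrundy (m + 34) = dawsonGrundy m := by
  simp only [dawsonGrundy, if_neg (show ¬m + 34 < 52 by omega), if_neg (show ¬m < 52 by omega),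
    Int.add_emod_right]

theorem dawsonGrundy_mex_certificate : ∀ n ∈ Finset.Icc (1 : ℤ) 173,
    dawsonGrundy n ∉ dawsonOptions dawsonGrundy n ∧
      ∀ k < dawsonGrundy n, k ∈ dawsonOptions dawsonGrundy n := by
  decide +kernel

theorem isDawsonSequence_dawsonGrundy : IsDawsonSequence dawsonGrundy :=
  isDawsonSequence_of_periodic (n₀ := 52) (p := 34) (by norm_num) (by norm_num)
    dawsonGrundy_of_nonpos
    dawsonGrundy_add_period
    fun n hn₁ hn₂ =>
      have h := dawsonGrundy_mex_certificate n (Finset.mem_Icc.2 ⟨hn₁, by omega⟩)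
      (mex_eq_of_forall_lt_mem h.1 h.2).symm

/-- The explicit periodic part of Dawson's chess: with `P` defined by `P n = 0`
for `n ≤ 0` and `P n = mex{ P(i-2) ^^^ P(n-1-i) : 1 ≤ i ≤ n }` for `n ≥ 1`, the
value `P n` for `n ≥ 52` depends only on `n mod 34`, with values (indexed by
residues 0, …, 33) equal to
8,1,1,2,0,3,1,1,0,3,3,2,2,4,4,5,5,9,3,3,0,1,1,3,0,2,1,1,0,4,5,3,7,4. -/
theorem dawson_periodic_part (P : ℤ → ℕ)
    (h0 : ∀ n : ℤ, n ≤ 0 → P n = 0)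
    (hrec : ∀ n : ℤ, 1 ≤ n →
      P n = mex ((Finset.Icc 1 n).image fun i => P (i - 2) ^^^ P (n - 1 - i))) :
    ∀ n : ℤ, 52 ≤ n →
      P n = [8, 1, 1, 2, 0, 3, 1, 1, 0, 3, 3, 2, 2, 4, 4, 5, 5, 9, 3, 3, 0, 1,
             1, 3, 0, 2, 1, 1, 0, 4, 5, 3, 7, 4].getD (n % 34).toNat 0 := by
  intro n hn
  rw [IsDawsonSequence.eq ⟨h0, hrec⟩ isDawsonSequence_dawsonGrundy, dawsonGrundy,
    if_neg (not_lt.2 hn)]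
end

section
/- For the two-level regular tree T_{n,m} (root with n children, each of which has m leaf children), the Node-Kayles Grundy value satisfies the recursion 𝒢(T_{n,m}) = mex{ XOR of nm copies of 1, XOR of (n−1) copies of 𝒢(T_{m}), 𝒢(T_{n−1,m}) XOR (XOR of (m−1) copies of 1) }, and equals: 1 if m is even; 2 if both n and m are odd; 3 if n is even and m is odd. -/
/-- Node-Kayles Grundy value of the position given by the induced subgraph of `G`
on the finite vertex set `s`: a move picks a vertex `v ∈ s` and removes its closed
neighborhood, and the Grundy value is the mex of the Grundy values of the options.
(For a disconnected position this agrees with the nim-sum of the components'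
Grundy values, by the Sprague–Grundy theory.) -/
noncomputable def nkGrundy {V : Type*} [DecidableEq V] (G : SimpleGraph V) [DecidableRel G.Adj]
    (s : Finset V) : ℕ :=
  mex (s.attach.image fun v =>
    nkGrundy G ((s.erase v.1).filter fun w => ¬ G.Adj v.1 w))
termination_by s.card
decreasing_by
  exact lt_of_le_of_lt (Finset.card_filter_le _ _) (Finset.card_erase_lt_of_mem v.2)

instance {V : Type*} (r : V → V → Prop) [DecidableEq V] [DecidableRel r] :
    DecidableRel (SimpleGraph.fromRel r).Adj :=
  fun a b => decidable_of_iff _ (SimpleGraph.fromRel_adj r a b).symm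

/-- The nim-sum (bitwise XOR) of `k` copies of the value `v`. -/
def nimRepl (k v : ℕ) : ℕ := (List.replicate k v).foldr (· ^^^ ·) 0

/-- The star with center `0` and leaves `1, …, m`: the tree `T_{m}` on the
vertex set `{0, …, m}`. -/
def starGraph (m : ℕ) : SimpleGraph ℕ :=
  SimpleGraph.fromRel (fun a b => a = 0 ∧ 1 ≤ b ∧ b ≤ m)

instance (m : ℕ) : DecidableRel (starGraph m).Adj :=
  fun a b => decidable_of_iff _ (SimpleGraph.fromRel_adj _ a b).symm

/-- The two-level regular tree `T_{n,m}`: root `0`, level-1 children `1, …, n`,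
and the `m` leaf children of child `a` being `n+(a-1)m+1, …, n+a·m`.  Its vertex
set is `{0, …, n + n·m}`. -/
def tree2 (n m : ℕ) : SimpleGraph ℕ :=
  SimpleGraph.fromRel (fun a b =>
    (a = 0 ∧ 1 ≤ b ∧ b ≤ n) ∨
    (1 ≤ a ∧ a ≤ n ∧ n + (a - 1) * m + 1 ≤ b ∧ b ≤ n + a * m))

instance (n m : ℕ) : DecidableRel (tree2 n m).Adj :=
  fun a b => decidable_of_iff _ (SimpleGraph.fromRel_adj _ a b).symm

/-!
Model `T_{n,m}` inside the infinite tree of words over `ℕ`, where the three kinds of move leave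
visibly structured positions: playing the root leaves `nm` isolated leaves, playing a child leaves
`n - 1` disjoint stars, and playing a leaf leaves a copy of `T_{n-1,m}` beside `m - 1` isolated
leaves. The sum rule `𝒢(s ∪ t) = 𝒢 s ^^^ 𝒢 t` for non-adjacent pieces evaluates these options,
induction on `n` then gives the closed form, and a relabelling carries it over to `tree2 n m`.
-/

theorem mex_notMem (s : Finset ℕ) : mex s ∉ s :=
  Nat.sInf_mem (s := {n | n ∉ s}) s.exists_notMem

theorem mem_of_lt_mex {s : Finset ℕ} {k : ℕ} (h : k < mex s) : k ∈ s := by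
  by_contra hk
  exact absurd (Nat.sInf_le hk) (not_le.mpr h)

theorem mex_eq_of {s : Finset ℕ} {n : ℕ} (hn : n ∉ s) (hlt : ∀ k < n, k ∈ s) : mex s = n :=
  (Nat.sInf_le hn).eq_or_lt.resolve_right fun h => mex_notMem s (hlt _ h)

/-- The Sprague–Grundy sum rule, at the level of option sets. -/
theorem mex_union_image_xor (A B : Finset ℕ) :
    mex (A.image (· ^^^ mex B) ∪ B.image (mex A ^^^ ·)) = mex A ^^^ mex B := by
  apply mex_eq_of
  · simp only [Finset.mem_union, Finset.mem_image, Nat.xor_left_inj, Nat.xor_right_inj]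
    rintro (⟨a, ha, rfl⟩ | ⟨b, hb, rfl⟩)
    exacts [mex_notMem A ha, mex_notMem B hb]
  · intro k hk
    rcases Nat.lt_xor_cases hk with h | h
    · exact Finset.mem_union_left _ (Finset.mem_image.mpr ⟨_, mem_of_lt_mex h, by simp⟩)
    · refine Finset.mem_union_right _ (Finset.mem_image.mpr ⟨_, mem_of_lt_mex h, ?_⟩)
      simp

theorem nimRepl_succ (k v : ℕ) : nimRepl (k + 1) v = v ^^^ nimRepl k v := rfl

theorem nimRepl_eq_ite (k v : ℕ) : nimRepl k v = if Even k then 0 else v := by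
  induction k with
  | zero => rfl
  | succ k ih => by_cases hk : Even k <;> simp [nimRepl_succ, ih, hk, Nat.even_add_one]

/-- The Grundy value of the star `T_k` with `k` leaves. -/
def starValue (k : ℕ) : ℕ := if Even k then 2 else 1

theorem mex_zero_nimRepl_eq_starValue {k : ℕ} (hk : 1 ≤ k) :
    mex {0, nimRepl (k - 1) 1} = starValue k := by
  obtain ⟨k, rfl⟩ : ∃ j, k = j + 1 := ⟨k - 1, by omega⟩
  by_cases h : Even k <;> simp [nimRepl_eq_ite, starValue, h, Nat.even_add_one] <;>
    exact mex_eq_of (by decide) (by decide)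

/-- The Grundy value of `T_{n,m}` for `m ≥ 1`; `T_{0,m}` is a single vertex. -/
def treeValue (n m : ℕ) : ℕ := if n = 0 ∨ Even m then 1 else if Odd n then 2 else 3

theorem mex_options_eq_treeValue_succ (n : ℕ) {m : ℕ} (hm : 1 ≤ m) :
    mex {nimRepl ((n + 1) * m) 1, nimRepl n (starValue m), treeValue n m ^^^ nimRepl (m - 1) 1} =
      treeValue (n + 1) m := by
  obtain ⟨m, rfl⟩ : ∃ k, m = k + 1 := ⟨m - 1, by omega⟩
  rcases Nat.eq_zero_or_pos n with rfl | hn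
  · by_cases hm : Even m <;>
      simp [treeValue, nimRepl_eq_ite, starValue, hm, Nat.even_add_one] <;>
      exact mex_eq_of (by decide) (by decide)
  · by_cases hm : Even m <;> by_cases hn' : Even n <;>
      simp [treeValue, nimRepl_eq_ite, starValue, hm, hn', Nat.even_add_one, Nat.even_mul,
        hn.ne', ← Nat.not_even_iff_odd] <;>
      exact mex_eq_of (by decide) (by decide)

section NodeKayles

variable {V : Type*} [DecidableEq V] (G : SimpleGraph V) [DecidableRel G.Adj]

def nkMove (s : Finset V) (v : V) : Finset V := (s.erase v).filter fun w => ¬ G.Adj v w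

theorem nkGrundy_eq_mex (s : Finset V) :
    nkGrundy G s = mex (s.image fun v => nkGrundy G (nkMove G s v)) := by
  rw [nkGrundy]
  congr 1
  ext
  simp [nkMove]

theorem nkMove_subset (s : Finset V) (v : V) : nkMove G s v ⊆ s :=
  (Finset.filter_subset _ _).trans (Finset.erase_subset _ _)

theorem card_nkMove_lt {s : Finset V} {v : V} (hv : v ∈ s) : (nkMove G s v).card < s.card :=
  (Finset.card_filter_le _ _).trans_lt (Finset.card_erase_lt_of_mem hv)

@[simp]
theorem nkGrundy_empty : nkGrundy G ∅ = 0 := by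
  rw [nkGrundy_eq_mex, Finset.image_empty]
  exact mex_eq_of (Finset.notMem_empty 0) fun _ h => absurd h (Nat.not_lt_zero _)

@[simp]
theorem nkGrundy_singleton (v : V) : nkGrundy G {v} = 1 := by
  rw [nkGrundy_eq_mex, Finset.image_singleton, nkMove, Finset.erase_singleton,
    Finset.filter_empty, nkGrundy_empty]
  exact mex_eq_of (by decide) (by decide)

theorem nkMove_union_left {s t : Finset V} {v : V} (hv : v ∈ s) (hst : Disjoint s t)
    (hadj : ∀ a ∈ s, ∀ b ∈ t, ¬ G.Adj a b) : nkMove G (s ∪ t) v = nkMove G s v ∪ t := by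
  rw [nkMove, nkMove, Finset.erase_union_distrib,
    Finset.erase_eq_of_notMem (Finset.disjoint_left.mp hst hv), Finset.filter_union,
    Finset.filter_true_of_mem fun w hw => hadj v hv w hw]

theorem nkGrundy_union {s t : Finset V} (hst : Disjoint s t)
    (hadj : ∀ a ∈ s, ∀ b ∈ t, ¬ G.Adj a b) :
    nkGrundy G (s ∪ t) = nkGrundy G s ^^^ nkGrundy G t := by
  induction hc : (s ∪ t).card using Nat.strong_induction_on generalizing s t with
  | _ N ih =>
  have hadj' : ∀ a ∈ t, ∀ b ∈ s, ¬ G.Adj a b := fun a ha b hb h => hadj b hb a ha h.symm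
  have hleft : ∀ v ∈ s,
      nkGrundy G (nkMove G (s ∪ t) v) = nkGrundy G (nkMove G s v) ^^^ nkGrundy G t := by
    intro v hv
    have hlt := card_nkMove_lt G (Finset.mem_union_left t hv)
    rw [nkMove_union_left G hv hst hadj] at hlt ⊢
    exact ih _ (hc ▸ hlt) (Finset.disjoint_of_subset_left (nkMove_subset G s v) hst)
      (fun a ha => hadj a (nkMove_subset G s v ha)) rfl
  have hright : ∀ v ∈ t,
      nkGrundy G (nkMove G (s ∪ t) v) = nkGrundy G s ^^^ nkGrundy G (nkMove G t v) := by
    intro v hv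
    have hmove : nkMove G (s ∪ t) v = s ∪ nkMove G t v := by
      rw [Finset.union_comm s t, nkMove_union_left G hv hst.symm hadj', Finset.union_comm]
    have hlt := card_nkMove_lt G (Finset.mem_union_right s hv)
    rw [hmove] at hlt ⊢
    exact ih _ (hc ▸ hlt) (Finset.disjoint_of_subset_right (nkMove_subset G t v) hst)
      (fun a ha b hb => hadj a ha b (nkMove_subset G t v hb)) rfl
  have hoptions : (s ∪ t).image (fun v => nkGrundy G (nkMove G (s ∪ t) v)) =
      (s.image fun v => nkGrundy G (nkMove G s v)).image (· ^^^ nkGrundy G t) ∪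
        (t.image fun v => nkGrundy G (nkMove G t v)).image (nkGrundy G s ^^^ ·) := by
    rw [Finset.image_union, Finset.image_image, Finset.image_image,
      Finset.image_congr hleft, Finset.image_congr hright]
    rfl
  rw [nkGrundy_eq_mex G (s ∪ t), hoptions, nkGrundy_eq_mex G s, nkGrundy_eq_mex G t]
  exact mex_union_image_xor _ _

theorem nkGrundy_biUnion {ι : Type*} [DecidableEq ι] {I : Finset ι} {t : ι → Finset V} {g : ℕ}
    (hdisj : (I : Set ι).PairwiseDisjoint t)
    (hadj : (I : Set ι).Pairwise fun i j => ∀ a ∈ t i, ∀ b ∈ t j, ¬ G.Adj a b)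
    (hg : ∀ i ∈ I, nkGrundy G (t i) = g) :
    nkGrundy G (I.biUnion t) = nimRepl I.card g := by
  induction I using Finset.induction_on with
  | empty => simp only [Finset.biUnion_empty, nkGrundy_empty, Finset.card_empty]; rfl
  | insert i I hi ih =>
    rw [Finset.coe_insert] at hdisj hadj
    have hij : ∀ j ∈ I, i ≠ j := fun j hj h => hi (h ▸ hj)
    rw [Finset.biUnion_insert, nkGrundy_union G, Finset.card_insert_of_notMem hi, nimRepl_succ,
      hg i (Finset.mem_insert_self i I),
      ih (hdisj.subset (Set.subset_insert _ _)) (hadj.mono (Set.subset_insert _ _))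
        fun j hj => hg j (Finset.mem_insert_of_mem hj)]
    · exact (Finset.disjoint_biUnion_right _ _ _).mpr fun j hj =>
        hdisj (Set.mem_insert _ _) (Set.mem_insert_of_mem _ hj) (hij j hj)
    · intro a ha b hb
      obtain ⟨j, hj, hbj⟩ := Finset.mem_biUnion.mp hb
      exact hadj (Set.mem_insert _ _) (Set.mem_insert_of_mem _ hj) (hij j hj) a ha b hbj

theorem nkGrundy_of_isIndepSet {s : Finset V} (hs : G.IsIndepSet s) :
    nkGrundy G s = nimRepl s.card 1 := by
  conv_lhs => rw [← Finset.biUnion_singleton_eq_self (s := s)]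
  refine nkGrundy_biUnion G ?_ ?_ fun v _ => nkGrundy_singleton G v
  · intro v _ w _ hvw
    simpa using hvw
  · intro v hv w hw hvw a ha b hb
    rw [Finset.mem_singleton] at ha hb
    subst ha hb
    exact hs hv hw hvw

theorem nkGrundy_star {s : Finset V} {r : V} {k : ℕ} (hr : r ∈ s) (hcard : s.card = k + 1)
    (hk : 1 ≤ k) (hcenter : ∀ v ∈ s, v ≠ r → G.Adj r v) (hleaves : G.IsIndepSet ↑(s.erase r)) :
    nkGrundy G s = starValue k := by
  have hroot : nkMove G s r = ∅ :=
    Finset.filter_false_of_mem fun w hw => not_not.mpr (hcenter w (Finset.mem_of_mem_erase hw)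
      (Finset.ne_of_mem_erase hw))
  have hleaf : ∀ v ∈ s, v ≠ r → nkGrundy G (nkMove G s v) = nimRepl (k - 1) 1 := by
    intro v hv hvr
    have hmove : nkMove G s v = (s.erase r).erase v := by
      ext w
      simp only [nkMove, Finset.mem_filter, Finset.mem_erase]
      constructor
      · rintro ⟨⟨hwv, hw⟩, hvw⟩
        exact ⟨hwv, fun hwr => hvw (hwr ▸ (hcenter v hv hvr).symm), hw⟩
      · rintro ⟨hwv, hwr, hw⟩
        exact ⟨⟨hwv, hw⟩, hleaves (by simp [hvr, hv]) (by simp [hwr, hw]) (Ne.symm hwv)⟩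
    rw [hmove, nkGrundy_of_isIndepSet G (hleaves.mono (by simp)),
      Finset.card_erase_of_mem (Finset.mem_erase.mpr ⟨hvr, hv⟩), Finset.card_erase_of_mem hr,
      hcard]
    rfl
  obtain ⟨v, hv, hvr⟩ := Finset.exists_mem_ne (by omega : 1 < s.card) r
  have hoptions : s.image (fun v => nkGrundy G (nkMove G s v)) = {0, nimRepl (k - 1) 1} := by
    ext x
    simp only [Finset.mem_image, Finset.mem_insert, Finset.mem_singleton]
    constructor
    · rintro ⟨w, hw, rfl⟩
      by_cases hwr : w = r
      · exact Or.inl (by rw [hwr, hroot, nkGrundy_empty])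
      · exact Or.inr (hleaf w hw hwr)
    · rintro (rfl | rfl)
      exacts [⟨r, hr, by rw [hroot, nkGrundy_empty]⟩, ⟨v, hv, hleaf v hv hvr⟩]
  rw [nkGrundy_eq_mex, hoptions, mex_zero_nimRepl_eq_starValue hk]

theorem nkGrundy_image {W : Type*} [DecidableEq W] (H : SimpleGraph W) [DecidableRel H.Adj]
    {f : V → W} {s : Finset V} (hf : Set.InjOn f s)
    (hadj : ∀ a ∈ s, ∀ b ∈ s, H.Adj (f a) (f b) ↔ G.Adj a b) :
    nkGrundy H (s.image f) = nkGrundy G s := by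
  induction hc : s.card using Nat.strong_induction_on generalizing s with
  | _ N ih =>
  have hmove : ∀ v ∈ s, nkMove H (s.image f) (f v) = (nkMove G s v).image f := by
    intro v hv
    ext y
    simp only [nkMove, Finset.mem_filter, Finset.mem_erase, Finset.mem_image]
    constructor
    · rintro ⟨⟨hyv, w, hw, rfl⟩, hvw⟩
      exact ⟨w, ⟨⟨fun h => hyv (h ▸ rfl), hw⟩, fun h => hvw ((hadj v hv w hw).mpr h)⟩, rfl⟩
    · rintro ⟨w, ⟨⟨hwv, hw⟩, hvw⟩, rfl⟩
      exact ⟨⟨fun h => hwv (hf hw hv h), w, hw, rfl⟩, fun h => hvw ((hadj v hv w hw).mp h)⟩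
  rw [nkGrundy_eq_mex, nkGrundy_eq_mex G, Finset.image_image]
  congr 1
  refine Finset.image_congr fun v hv => ?_
  have hsub := nkMove_subset G s v
  rw [Function.comp_apply, hmove v hv, ih _ (hc ▸ card_nkMove_lt G hv) (hf.mono hsub)
    (fun a ha b hb => hadj a (hsub ha) b (hsub hb)) rfl]

end NodeKayles

/-- The infinite rooted tree on words over `ℕ`, in which the parent of `a :: w` is `w`. -/
def wordTree : SimpleGraph (List ℕ) := SimpleGraph.fromRel fun x y => y ≠ [] ∧ y.tail = x

instance : DecidableRel wordTree.Adj :=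
  fun a b => decidable_of_iff _ (SimpleGraph.fromRel_adj _ a b).symm

theorem wordTree_adj {x y : List ℕ} :
    wordTree.Adj x y ↔ (∃ a, y = a :: x) ∨ ∃ a, x = a :: y := by
  simp only [wordTree, SimpleGraph.fromRel_adj]
  constructor
  · rintro ⟨-, ⟨hy, rfl⟩ | ⟨hx, rfl⟩⟩
    · exact Or.inl ⟨y.head hy, (List.cons_head_tail hy).symm⟩
    · exact Or.inr ⟨x.head hx, (List.cons_head_tail hx).symm⟩
  · rintro (⟨a, rfl⟩ | ⟨a, rfl⟩) <;> simp

namespace wordTree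

def leafLayer (I : Finset ℕ) (m : ℕ) : Finset (List ℕ) :=
  (I ×ˢ Finset.range m).image fun p => [p.2, p.1]

def branch (i m : ℕ) : Finset (List ℕ) := insert [i] ((Finset.range m).image fun j => [j, i])

/-- The copy of `T_{|I|,m}` with root `[]`. -/
def twoLevel (I : Finset ℕ) (m : ℕ) : Finset (List ℕ) := insert [] (I.biUnion fun i => branch i m)

variable {I : Finset ℕ} {i j m : ℕ} {x : List ℕ}

@[simp]
theorem mem_leafLayer : x ∈ leafLayer I m ↔ ∃ i ∈ I, ∃ j < m, x = [j, i] := by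
  simp [leafLayer, eq_comm, and_assoc]

@[simp]
theorem mem_branch : x ∈ branch i m ↔ x = [i] ∨ ∃ j < m, x = [j, i] := by
  simp [branch, eq_comm]

@[simp]
theorem mem_twoLevel : x ∈ twoLevel I m ↔ x = [] ∨ ∃ i ∈ I, x = [i] ∨ ∃ j < m, x = [j, i] := by
  simp [twoLevel]

theorem nkMove_twoLevel_root : nkMove wordTree (twoLevel I m) [] = leafLayer I m := by
  ext x
  rcases x with _ | ⟨a, _ | ⟨b, _ | ⟨c, x⟩⟩⟩ <;> simp [nkMove, wordTree_adj]

theorem nkMove_twoLevel_child :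
    nkMove wordTree (twoLevel I m) [i] = (I.erase i).biUnion fun i' => branch i' m := by
  ext x
  rcases x with _ | ⟨a, _ | ⟨b, _ | ⟨c, x⟩⟩⟩ <;> simp [nkMove, wordTree_adj]
  tauto

theorem nkMove_twoLevel_leaf (hi : i ∈ I) :
    nkMove wordTree (twoLevel I m) [j, i] =
      twoLevel (I.erase i) m ∪ ((Finset.range m).erase j).image fun j' => [j', i] := by
  ext x
  rcases x with _ | ⟨a, _ | ⟨b, _ | ⟨c, x⟩⟩⟩ <;> simp [nkMove, wordTree_adj] <;> grind

theorem nkGrundy_leafLayer : nkGrundy wordTree (leafLayer I m) = nimRepl (I.card * m) 1 := by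
  have hindep : wordTree.IsIndepSet (leafLayer I m : Set (List ℕ)) := by
    rintro x hx y hy -
    obtain ⟨i, -, j, -, rfl⟩ := mem_leafLayer.mp hx
    obtain ⟨i', -, j', -, rfl⟩ := mem_leafLayer.mp hy
    simp [wordTree_adj]
  rw [nkGrundy_of_isIndepSet _ hindep, leafLayer, Finset.card_image_of_injective,
    Finset.card_product, Finset.card_range]
  intro p q h
  simp only [List.cons.injEq, and_true] at h
  exact Prod.ext h.2 h.1

theorem nkGrundy_branch (hm : 1 ≤ m) : nkGrundy wordTree (branch i m) = starValue m := by
  refine nkGrundy_star _ (r := [i]) (by simp) ?_ hm ?_ ?_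
  · rw [branch, Finset.card_insert_of_notMem (by simp), Finset.card_image_of_injective _
      (fun j j' h => by simpa using h), Finset.card_range]
  · intro v hv hvi
    obtain ⟨j, -, rfl⟩ := (mem_branch.mp hv).resolve_left hvi
    simp [wordTree_adj]
  · rintro x hx y hy -
    obtain ⟨j, -, rfl⟩ := (mem_branch.mp (Finset.mem_of_mem_erase hx)).resolve_left
      (Finset.ne_of_mem_erase hx)
    obtain ⟨j', -, rfl⟩ := (mem_branch.mp (Finset.mem_of_mem_erase hy)).resolve_left
      (Finset.ne_of_mem_erase hy)
    simp [wordTree_adj]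

theorem nkGrundy_twoLevel (hm : 1 ≤ m) (I : Finset ℕ) :
    nkGrundy wordTree (twoLevel I m) = treeValue I.card m := by
  induction hI : I.card generalizing I with
  | zero => simp [Finset.card_eq_zero.mp hI, twoLevel, treeValue]
  | succ n ih =>
  have hchild : ∀ i ∈ I, nkGrundy wordTree (nkMove wordTree (twoLevel I m) [i]) =
      nimRepl n (starValue m) := by
    intro i hi
    rw [nkMove_twoLevel_child, nkGrundy_biUnion _ ?_ ?_ fun _ _ => nkGrundy_branch hm,
      Finset.card_erase_of_mem hi, hI, Nat.add_sub_cancel]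
    · intro i' _ i'' _ h
      simp only [Function.onFun, Finset.disjoint_left, mem_branch]
      grind
    · intro i' _ i'' _ h x hx y hy
      rcases mem_branch.mp hx with rfl | ⟨j, -, rfl⟩ <;>
        rcases mem_branch.mp hy with rfl | ⟨j', -, rfl⟩ <;> simp [wordTree_adj, h, Ne.symm h]
  have hleaf : ∀ i ∈ I, ∀ j < m, nkGrundy wordTree (nkMove wordTree (twoLevel I m) [j, i]) =
      treeValue n m ^^^ nimRepl (m - 1) 1 := by
    intro i hi j hj
    have hrest : wordTree.IsIndepSet
        (((Finset.range m).erase j).image fun j' => [j', i] : Set (List ℕ)) := by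
      rintro x hx y hy -
      simp only [Finset.coe_image, Set.mem_image] at hx hy
      obtain ⟨j₁, -, rfl⟩ := hx
      obtain ⟨j₂, -, rfl⟩ := hy
      simp [wordTree_adj]
    rw [nkMove_twoLevel_leaf hi, nkGrundy_union,
      ih _ (by rw [Finset.card_erase_of_mem hi, hI]; rfl), nkGrundy_of_isIndepSet _ hrest,
      Finset.card_image_of_injective _ (fun j j' h => by simpa using h),
      Finset.card_erase_of_mem (Finset.mem_range.mpr hj), Finset.card_range]
    · simp only [Finset.disjoint_left, mem_twoLevel, Finset.mem_image]
      grind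
    · intro x hx y hy
      simp only [mem_twoLevel, Finset.mem_image] at hx hy
      grind [wordTree_adj]
  obtain ⟨i, hi⟩ : I.Nonempty := Finset.card_pos.mp (by omega)
  have hoptions :
      (twoLevel I m).image (fun v => nkGrundy wordTree (nkMove wordTree (twoLevel I m) v)) =
      {nimRepl ((n + 1) * m) 1, nimRepl n (starValue m), treeValue n m ^^^ nimRepl (m - 1) 1} := by
    ext x
    simp only [Finset.mem_image, mem_twoLevel, Finset.mem_insert, Finset.mem_singleton]
    constructor
    · rintro ⟨v, rfl | ⟨i, hi, rfl | ⟨j, hj, rfl⟩⟩, rfl⟩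
      · rw [nkMove_twoLevel_root, nkGrundy_leafLayer, hI]
        exact Or.inl rfl
      · exact Or.inr (Or.inl (hchild i hi))
      · exact Or.inr (Or.inr (hleaf i hi j hj))
    · rintro (rfl | rfl | rfl)
      · exact ⟨[], Or.inl rfl, by rw [nkMove_twoLevel_root, nkGrundy_leafLayer, hI]⟩
      · exact ⟨[i], Or.inr ⟨i, hi, Or.inl rfl⟩, hchild i hi⟩
      · exact ⟨[0, i], Or.inr ⟨i, hi, Or.inr ⟨0, hm, rfl⟩⟩, hleaf i hi 0 hm⟩
  rw [nkGrundy_eq_mex, hoptions, mex_options_eq_treeValue_succ n hm]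

end wordTree

theorem mul_le_add_lt_mul_add_iff {i i' j m : ℕ} (hj : j < m) :
    i * m ≤ i' * m + j ∧ i' * m + j < i * m + m ↔ i = i' := by
  constructor
  · rintro ⟨h₁, h₂⟩
    rcases lt_trichotomy i i' with h | h | h
    · nlinarith
    · exact h
    · nlinarith
  · rintro rfl
    omega

section tree2Label

open wordTree

def tree2Label (n m : ℕ) : List ℕ → ℕ
  | [] => 0
  | [i] => i + 1
  | [j, i] => n + i * m + j + 1
  | _ => 0

theorem tree2_adj_tree2Label {n m : ℕ} {x y : List ℕ} (hx : x ∈ twoLevel (Finset.range n) m)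
    (hy : y ∈ twoLevel (Finset.range n) m) :
    (tree2 n m).Adj (tree2Label n m x) (tree2Label n m y) ↔ wordTree.Adj x y := by
  simp only [mem_twoLevel, Finset.mem_range] at hx hy
  rcases hx with rfl | ⟨i, hi, rfl | ⟨j, hj, rfl⟩⟩ <;>
    rcases hy with rfl | ⟨i', hi', rfl | ⟨j', hj', rfl⟩⟩ <;>
    simp [tree2, tree2Label, wordTree_adj, Nat.add_one_mul] <;>
    -- a child and a leaf are adjacent iff the leaf's label lies in the child's block of `m` labels
    first
    | omega
    | have := mul_le_add_lt_mul_add_iff (i := i) (i' := i') hj'; omega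
    | have := mul_le_add_lt_mul_add_iff (i := i') (i' := i) hj; omega

theorem tree2Label_injOn (n m : ℕ) : Set.InjOn (tree2Label n m) (twoLevel (Finset.range n) m) := by
  intro x hx y hy h
  simp only [Finset.mem_coe, mem_twoLevel, Finset.mem_range] at hx hy
  rcases hx with rfl | ⟨i, hi, rfl | ⟨j, hj, rfl⟩⟩ <;>
    rcases hy with rfl | ⟨i', hi', rfl | ⟨j', hj', rfl⟩⟩ <;>
    simp only [tree2Label, List.cons.injEq, and_true] at h ⊢ <;> try omega
  have hi : i' = i := (mul_le_add_lt_mul_add_iff hj).mp (by omega)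
  subst hi
  omega

theorem image_tree2Label (n m : ℕ) :
    (twoLevel (Finset.range n) m).image (tree2Label n m) = Finset.range (n + n * m + 1) := by
  ext b
  simp only [Finset.mem_image, mem_twoLevel, Finset.mem_range]
  constructor
  · rintro ⟨x, rfl | ⟨i, hi, rfl | ⟨j, hj, rfl⟩⟩, rfl⟩ <;> simp only [tree2Label]
    · omega
    · omega
    · nlinarith
  · intro hb
    rcases Nat.eq_zero_or_pos b with rfl | hb0
    · exact ⟨[], Or.inl rfl, rfl⟩
    by_cases hbn : b ≤ n
    · exact ⟨[b - 1], Or.inr ⟨b - 1, by omega, Or.inl rfl⟩, by simp only [tree2Label]; omega⟩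
    have hm : 0 < m := Nat.pos_of_ne_zero fun h => hbn (by subst h; omega)
    refine ⟨[(b - n - 1) % m, (b - n - 1) / m],
      Or.inr ⟨_, (Nat.div_lt_iff_lt_mul hm).mpr (by omega), Or.inr ⟨_, Nat.mod_lt _ hm, rfl⟩⟩, ?_⟩
    have := Nat.div_add_mod' (b - n - 1) m
    simp only [tree2Label]
    omega

end tree2Label

theorem nkGrundy_tree2_eq_treeValue (n : ℕ) {m : ℕ} (hm : 1 ≤ m) :
    nkGrundy (tree2 n m) (Finset.range (n + n * m + 1)) = treeValue n m := by
  rw [← image_tree2Label, nkGrundy_image wordTree _ (tree2Label_injOn n m)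
    fun _ ha _ hb => tree2_adj_tree2Label ha hb, wordTree.nkGrundy_twoLevel hm, Finset.card_range]

theorem nkGrundy_starGraph {m : ℕ} (hm : 1 ≤ m) :
    nkGrundy (starGraph m) (Finset.range (m + 1)) = starValue m := by
  refine nkGrundy_star _ (r := 0) (by simp) (Finset.card_range _) hm ?_ ?_
  · intro v hv hv0
    simp only [Finset.mem_range] at hv
    exact (SimpleGraph.fromRel_adj _ _ _).mpr ⟨Ne.symm hv0, Or.inl ⟨rfl, by omega, by omega⟩⟩
  · intro a ha b hb
    simp only [Finset.coe_erase, Set.mem_sdiff, Set.mem_singleton_iff] at ha hb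
    simp [starGraph, ha.2, hb.2]

/-- Node-Kayles on `T_{n,m}` satisfies the recursion
`𝒢(T_{n,m}) = mex{ ⊕_{n·m} 1, ⊕_{n-1} 𝒢(T_{m}), 𝒢(T_{n-1,m}) ^^^ ⊕_{m-1} 1 }`
and its Grundy value equals 1 if `m` is even, 2 if both `n, m` are odd, and
3 if `n` is even and `m` is odd. -/
theorem nkGrundy_tree2 (n m : ℕ) (hn : 1 ≤ n) (hm : 1 ≤ m) :
    nkGrundy (tree2 n m) (Finset.range (n + n * m + 1)) =
      mex {nimRepl (n * m) 1,
           nimRepl (n - 1) (nkGrundy (starGraph m) (Finset.range (m + 1))),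
           nkGrundy (tree2 (n - 1) m) (Finset.range ((n - 1) + (n - 1) * m + 1))
             ^^^ nimRepl (m - 1) 1} ∧
    nkGrundy (tree2 n m) (Finset.range (n + n * m + 1)) =
      if Even m then 1 else if Odd n then 2 else 3 := by
  obtain ⟨k, rfl⟩ : ∃ k, n = k + 1 := ⟨n - 1, by omega⟩
  rw [Nat.add_sub_cancel, nkGrundy_tree2_eq_treeValue _ hm, nkGrundy_tree2_eq_treeValue _ hm,
    nkGrundy_starGraph hm, mex_options_eq_treeValue_succ k hm]
  simp [treeValue]
end

section
/- Suppose P, T : ℤ → ℕ satisfy: P(n) = P(n−34) for all n ≥ 18, T(i) = T(i−34) for all 311 ≤ i ≤ 441 (verified computationally), and T(k) = mex{ P(i−2) XOR T(k−1−i) : 1 ≤ i ≤ k+2 } for all k ≥ 2. Then T(k) = T(k−34) for all k ≥ 345. -/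
/-- Periodicity propagation: if `P` is 34-periodic from index 18 on, the
34-periodicity of `T` has been verified on the window `311 ≤ i ≤ 441`, and `T`
satisfies the grafting recursion `T k = mex{ P(i-2) ^^^ T(k-1-i) : 1 ≤ i ≤ k+2 }`
for `k ≥ 2`, then `T k = T (k - 34)` for all `k ≥ 345`. -/
theorem periodicity_propagation (P T : ℤ → ℕ)
    (hP : ∀ n : ℤ, 18 ≤ n → P n = P (n - 34))
    (hTwin : ∀ i : ℤ, 311 ≤ i → i ≤ 441 → T i = T (i - 34))
    (hTrec : ∀ k : ℤ, 2 ≤ k →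
      T k = mex ((Finset.Icc 1 (k + 2)).image fun i => P (i - 2) ^^^ T (k - 1 - i))) :
    ∀ k : ℤ, 345 ≤ k → T k = T (k - 34) := by
  have main : ∀ n : ℕ, T (345 + n) = T (345 + n - 34) := by
    intro n
    induction n using Nat.strong_induction_on with
    | _ n ih =>
      by_cases hn : n ≤ 96
      · exact hTwin (345 + n) (by omega) (by omega)
      · have IH' : ∀ m : ℤ, 345 ≤ m → m < 345 + n → T m = T (m - 34) := by
          intro m h1 h2
          obtain ⟨j, rfl⟩ : ∃ j : ℕ, m = 345 + j := ⟨(m - 345).toNat, by omega⟩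
          exact ih j (by omega)
        set k : ℤ := 345 + n with hk
        have hk442 : 442 ≤ k := by omega
        rw [hTrec k (by omega), hTrec (k - 34) (by omega)]
        congr 1
        ext x
        simp only [Finset.mem_image, Finset.mem_Icc]
        constructor
        · rintro ⟨i, ⟨h1, h2⟩, rfl⟩
          by_cases hi : i ≤ k - 346
          · refine ⟨i, ⟨h1, by omega⟩, ?_⟩
            rw [show (k - 34 - 1 - i : ℤ) = (k - 1 - i) - 34 by ring,
              ← IH' (k - 1 - i) (by omega) (by omega)]
          · refine ⟨i - 34, ⟨by omega, by omega⟩, ?_⟩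
            rw [show (k - 34 - 1 - (i - 34) : ℤ) = k - 1 - i by ring,
              show (i - 34 - 2 : ℤ) = (i - 2) - 34 by ring,
              ← hP (i - 2) (by omega)]
        · rintro ⟨j, ⟨h1, h2⟩, rfl⟩
          by_cases hj : j ≤ k - 346
          · refine ⟨j, ⟨h1, by omega⟩, ?_⟩
            rw [show (k - 34 - 1 - j : ℤ) = (k - 1 - j) - 34 by ring,
              ← IH' (k - 1 - j) (by omega) (by omega)]
          · refine ⟨j + 34, ⟨by omega, by omega⟩, ?_⟩
            rw [show (k - 1 - (j + 34) : ℤ) = k - 34 - 1 - j by ring,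
              hP (j + 34 - 2) (by omega),
              show (j + 34 - 2 - 34 : ℤ) = j - 2 by ring]
  intro k hk
  obtain ⟨n, rfl⟩ : ∃ n : ℕ, k = 345 + n := ⟨(k - 345).toNat, by omega⟩
  exact main n
end

section
/- Define T₂ : ℤ → ℕ by T₂(k) = mex{ T(i−4) XOR T(k−i) : 1 ≤ i ≤ k+3 } for k ≥ 1, where T is the Grundy sequence of T_{2} ⊙_k (star with 2 leaves and attached path of k vertices), extended by T(−3)=1, T(−2)=0, T(−1)=0, T(0)=2. Given that T(i) = T(i−34) for all i ≥ 345 and that T₂(i) = T₂(i−34) holds for 675 ≤ i ≤ 747 (verified by computation), it follows that T₂(k) = T₂(k−34) for all k ≥ 675, i.e. T₂ is eventually periodic with period 34. -/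
/-- Let `T : ℤ → ℕ` be the Grundy sequence of the star with two leaves grafted
to a path of `k` vertices, extended by `T(-3)=1, T(-2)=0, T(-1)=0, T(0)=2`, and
let `T₂ k = mex{ T(i-4) ^^^ T(k-i) : 1 ≤ i ≤ k+3 }` for `k ≥ 1` (the Grundy
sequence of two such stars joined by a path).  Given that `T i = T (i - 34)`
for all `i ≥ 345` and that `T₂ i = T₂ (i - 34)` holds on the verified window
`675 ≤ i ≤ 747`, it follows that `T₂ k = T₂ (k - 34)` for all `k ≥ 675`,
i.e. `T₂` is eventually periodic with period 34. -/
theorem doubleStar_eventually_periodic (T T₂ : ℤ → ℕ)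
    (hT3 : T (-3) = 1) (hT2 : T (-2) = 0) (hT1 : T (-1) = 0) (hT0 : T 0 = 2)
    (hrec : ∀ k : ℤ, 1 ≤ k →
      T₂ k = mex ((Finset.Icc 1 (k + 3)).image fun i => T (i - 4) ^^^ T (k - i)))
    (hTper : ∀ i : ℤ, 345 ≤ i → T i = T (i - 34))
    (hwin : ∀ i : ℤ, 675 ≤ i → i ≤ 747 → T₂ i = T₂ (i - 34)) :
    ∀ k : ℤ, 675 ≤ k → T₂ k = T₂ (k - 34) := by
  intro k hk
  by_cases hk7 : k ≤ 747
  · exact hwin k hk hk7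
  · push_neg at hk7
    rw [hrec k (by linarith), hrec (k - 34) (by linarith)]
    congr 1
    ext x
    simp only [Finset.mem_image, Finset.mem_Icc]
    constructor
    · rintro ⟨i, ⟨hi1, hi2⟩, rfl⟩
      by_cases h : i ≤ k - 345
      · refine ⟨i, ⟨hi1, by linarith⟩, ?_⟩
        have h1 : k - 34 - i = k - i - 34 := by ring
        rw [h1, ← hTper (k - i) (by linarith)]
      · push_neg at h
        refine ⟨i - 34, ⟨by linarith, by linarith⟩, ?_⟩
        have h1 : i - 34 - 4 = i - 4 - 34 := by ring
        have h2 : k - 34 - (i - 34) = k - i := by ring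
        rw [h1, h2, ← hTper (i - 4) (by linarith)]
    · rintro ⟨j, ⟨hj1, hj2⟩, rfl⟩
      by_cases h : j ≤ k - 379
      · refine ⟨j, ⟨hj1, by linarith⟩, ?_⟩
        have h1 : k - 34 - j = k - j - 34 := by ring
        rw [h1, ← hTper (k - j) (by linarith)]
      · push_neg at h
        refine ⟨j + 34, ⟨by linarith, by linarith⟩, ?_⟩
        have h1 : j + 34 - 4 = j + 30 := by ring
        have h2 : k - (j + 34) = k - 34 - j := by ring
        have h3 : j + 30 - 34 = j - 4 := by ring
        rw [h1, h2, hTper (j + 30) (by linarith), h3]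
end
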